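/- Let D = (V(D), E(D), w) be a vertex-weighted oriented cycle such that w(x) ≥ 2 for every vertex x ∈ V(D). Then pd(I(D)) = |E(D)| − 1. -/

import Mathlib

open MvPolynomial

/-- A minimal graded free resolution `⋯ → F₂ → F₁ → F₀ → I → 0` of an ideal `I` of the
polynomial ring `S = MvPolynomial σ k`.  The `i`-th free module
`Fᵢ = ⨁_a S(-deg i a)` is modelled as `Fin (rk i) →₀ S`, where `deg i a` records the
degree shift (internal degree) of the `a`-th basis element of `Fᵢ`. -/
structure MinimalGradedFreeResolution {k : Type*} [Field k] {σ : Type*}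
    (I : Ideal (MvPolynomial σ k)) where
  /-- the rank of the `i`-th free module -/
  rk : ℕ → ℕ
  /-- the degree shifts of the basis elements -/
  deg : (i : ℕ) → Fin (rk i) → ℕ
  /-- the augmentation map `F₀ → S`, whose image is `I` -/
  aug : (Fin (rk 0) →₀ MvPolynomial σ k) →ₗ[MvPolynomial σ k] MvPolynomial σ k
  /-- the differentials of the resolution -/
  d : (i : ℕ) → ((Fin (rk (i + 1)) →₀ MvPolynomial σ k) →ₗ[MvPolynomial σ k]
      (Fin (rk i) →₀ MvPolynomial σ k))
  /-- the image of the augmentation map is `I` -/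
  range_aug : LinearMap.range aug = I
  /-- exactness at homological position `0` -/
  exact_zero : LinearMap.range (d 0) = LinearMap.ker aug
  /-- exactness at homological position `i + 1` -/
  exact_succ : ∀ i, LinearMap.range (d (i + 1)) = LinearMap.ker (d i)
  /-- the augmentation map is graded: the image of the `a`-th basis vector of `F₀`
  is homogeneous of degree `deg 0 a` -/
  aug_graded : ∀ a, (aug (Finsupp.single a 1)).IsHomogeneous (deg 0 a)
  /-- the differentials are graded maps (of degree `0` for the shifted gradings) -/
  d_graded : ∀ i b a, (d i (Finsupp.single b 1)) a = 0 ∨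
      ∃ e, ((d i (Finsupp.single b 1)) a).IsHomogeneous e ∧ deg i a + e = deg (i + 1) b
  /-- minimality: every entry of the matrix of each differential lies in the
  irrelevant maximal ideal `(x_1, …, x_n)` -/
  minimal : ∀ i b a, constantCoeff ((d i (Finsupp.single b 1)) a) = 0

namespace MinimalGradedFreeResolution

variable {k : Type*} [Field k] {σ : Type*} {I : Ideal (MvPolynomial σ k)}

/-- The graded Betti number `β_{i,j}(I)`: the number of basis elements of `Fᵢ`
of (internal) degree `j`. -/
noncomputable def betti (R : MinimalGradedFreeResolution I) (i j : ℕ) : ℕ :=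
  Nat.card {a : Fin (R.rk i) // R.deg i a = j}

/-- The (Castelnuovo–Mumford) regularity `reg I = max { j - i : β_{i,j}(I) ≠ 0 }`. -/
noncomputable def reg (R : MinimalGradedFreeResolution I) : ℤ :=
  sSup {r : ℤ | ∃ i j : ℕ, R.betti i j ≠ 0 ∧ r = (j : ℤ) - (i : ℤ)}

/-- The projective dimension `pd I = max { i : β_{i,j}(I) ≠ 0 for some j }`. -/
noncomputable def pd (R : MinimalGradedFreeResolution I) : ℕ :=
  sSup {i : ℕ | ∃ j, R.betti i j ≠ 0}

end MinimalGradedFreeResolution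

/-- A vertex-weighted oriented graph `D = (V, E, w)`: each ordered pair of distinct
vertices carries at most one edge, having a unique direction, and `w : V → ℕ⁺` is a
weight function. -/
structure VWOrientedGraph (V : Type*) where
  /-- `edge u v` means there is an edge directed from `u` to `v` -/
  edge : V → V → Prop
  loopless : ∀ v, ¬ edge v v
  /-- no pair of vertices is joined in both directions -/
  oriented : ∀ u v, edge u v → ¬ edge v u
  /-- the weight function -/
  w : V → ℕ
  one_le_w : ∀ v, 1 ≤ w v

namespace VWOrientedGraph

variable {V : Type*}

/-- The underlying simple graph of an oriented graph. -/
def underlying (D : VWOrientedGraph V) : SimpleGraph V where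
  Adj u v := D.edge u v ∨ D.edge v u
  symm := ⟨fun _ _ h => h.symm⟩
  loopless := ⟨fun v h => h.elim (D.loopless v) (D.loopless v)⟩

/-- The degree `d(v)` of a vertex `v` in the underlying simple graph. -/
noncomputable def degree (D : VWOrientedGraph V) (v : V) : ℕ :=
  Nat.card {u : V // D.underlying.Adj v u}

/-- The number of edges `|E(D)|`. -/
noncomputable def edgeCount (D : VWOrientedGraph V) : ℕ :=
  Nat.card {p : V × V // D.edge p.1 p.2}

/-- The edge ideal `I(D) = (x_u · x_v^{w(v)} : u v ∈ E(D))` of a vertex-weighted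
oriented graph, in the polynomial ring over `k` with variables the vertices of `D`. -/
noncomputable def edgeIdeal (k : Type*) [Field k] (D : VWOrientedGraph V) :
    Ideal (MvPolynomial V k) :=
  Ideal.span {p | ∃ u v, D.edge u v ∧ p = X u * X v ^ D.w v}

/-- A rooted forest: a disjoint union of rooted trees, i.e. of oriented trees all of
whose edges are oriented away from the root.  Equivalently, the underlying graph is a
forest (acyclic) and every vertex has at most one incoming edge. -/
def IsRootedForest (D : VWOrientedGraph V) : Prop :=
  D.underlying.IsAcyclic ∧ ∀ u u' v, D.edge u v → D.edge u' v → u = u'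

/-- A rooted tree: a connected rooted forest. -/
def IsRootedTree (D : VWOrientedGraph V) : Prop :=
  D.IsRootedForest ∧ D.underlying.Connected

/-- An oriented cycle: an orientation of a cycle `x_1 x_2 ⋯ x_n x_1` (`n ≥ 3`) in which
each vertex dominates its successor. -/
def IsOrientedCycle (D : VWOrientedGraph V) : Prop :=
  ∃ n : ℕ, 3 ≤ n ∧ ∃ c : ZMod n ≃ V,
    ∀ u v, D.edge u v ↔ ∃ i : ZMod n, u = c i ∧ v = c (i + 1)

end VWOrientedGraph

/-!
When all weights are at least `2`, no generator `x_u x_v^{w(v)}` of `I(D)` divides the lcm of the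
others: its exponent of `x_v` is `w(v) ≥ 2`, while in every other generator it is at most `1`,
because `v` is the head of only one edge of the cycle. Hence the Taylor complex of these `|E(D)|`
monomials, exact by the usual contracting homotopy, is a minimal free resolution; its `i`-th module
has a basis indexed by the `(i + 1)`-subsets of the generators. Minimal free resolutions of the same
ideal have the same ranks: the comparison maps in both directions compose to chain maps homotopic to
the identity, and minimality makes such maps invertible modulo the variables. So
`rk Fᵢ = binom(|E(D)|, i + 1)`, which is nonzero exactly for `i ≤ |E(D)| - 1`.
-/

universe u v

theorem Matrix.card_le_of_mul_eq_one {R m n : Type*} [CommSemiring R] [StrongRankCondition R]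
    [Fintype m] [Fintype n] [DecidableEq m] {A : Matrix m n R} {B : Matrix n m R}
    (h : A * B = 1) : Fintype.card m ≤ Fintype.card n :=
  calc Fintype.card m = (A * B).rank := by rw [h, Matrix.rank_one]
    _ ≤ A.rank := Matrix.rank_mul_le_left A B
    _ ≤ Fintype.card n := Matrix.rank_le_card_width A

namespace LinearMap

section constantCoeffMatrix

variable {R σ κ κ' κ'' : Type*} [CommSemiring R]

noncomputable def constantCoeffMatrix
    (L : (κ' →₀ MvPolynomial σ R) →ₗ[MvPolynomial σ R] (κ →₀ MvPolynomial σ R)) :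
    Matrix κ κ' R :=
  Matrix.of fun a b => constantCoeff (L (Finsupp.single b 1) a)

theorem constantCoeffMatrix_comp [Fintype κ']
    (L : (κ' →₀ MvPolynomial σ R) →ₗ[MvPolynomial σ R] (κ →₀ MvPolynomial σ R))
    (L' : (κ'' →₀ MvPolynomial σ R) →ₗ[MvPolynomial σ R] (κ' →₀ MvPolynomial σ R)) :
    (L ∘ₗ L').constantCoeffMatrix = L.constantCoeffMatrix * L'.constantCoeffMatrix := by
  ext a c
  have expand (y : κ' →₀ MvPolynomial σ R) :
      L y a = ∑ b, y b * L (Finsupp.single b 1) a := by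
    conv_lhs => rw [← Finsupp.univ_sum_single y]
    rw [map_sum, Finsupp.finsetSum_apply]
    refine Finset.sum_congr rfl fun b _ => ?_
    rw [← Finsupp.smul_single_one, map_smul, Finsupp.smul_apply, smul_eq_mul]
  simp only [constantCoeffMatrix, Matrix.of_apply, Matrix.mul_apply, comp_apply]
  rw [expand, map_sum]
  simp only [map_mul]
  exact Finset.sum_congr rfl fun b _ => mul_comm _ _

theorem constantCoeffMatrix_id [DecidableEq κ] :
    (id : (κ →₀ MvPolynomial σ R) →ₗ[MvPolynomial σ R] _).constantCoeffMatrix = 1 := by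
  ext a b
  by_cases h : a = b
  · simp [constantCoeffMatrix, h, Matrix.one_apply]
  · simp [constantCoeffMatrix, h, Finsupp.single_apply, Ne.symm h]

theorem constantCoeffMatrix_add
    (L L' : (κ' →₀ MvPolynomial σ R) →ₗ[MvPolynomial σ R] (κ →₀ MvPolynomial σ R)) :
    (L + L').constantCoeffMatrix = L.constantCoeffMatrix + L'.constantCoeffMatrix := by
  ext a b
  simp [constantCoeffMatrix]

end constantCoeffMatrix

section liftAlong

variable {R M N ι : Type*} [Semiring R] [AddCommMonoid M] [AddCommMonoid N] [Module R M]
  [Module R N]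

open Classical in
noncomputable def liftAlong (e : M →ₗ[R] N) (f : (ι →₀ R) →ₗ[R] N) : (ι →₀ R) →ₗ[R] M :=
  Finsupp.linearCombination R fun b =>
    if h : f (Finsupp.single b 1) ∈ range e then h.choose else 0

theorem comp_liftAlong {e : M →ₗ[R] N} {f : (ι →₀ R) →ₗ[R] N} (h : range f ≤ range e) :
    e ∘ₗ liftAlong e f = f := by
  refine Finsupp.lhom_ext' fun b => ext_ring ?_
  have hb : f (Finsupp.single b 1) ∈ range e := h (mem_range_self f _)
  simp only [comp_apply, Finsupp.lsingle_apply, liftAlong, Finsupp.linearCombination_single,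
    one_smul, dif_pos hb]
  exact hb.choose_spec

end liftAlong

end LinearMap

/-- `MinimalGradedFreeResolution` without the grading, and with bases indexed by arbitrary finite
types, so that the Taylor resolution (indexed by subsets of generators) fits without renumbering. -/
structure MinimalFreeResolution {k σ : Type*} [CommRing k] (I : Ideal (MvPolynomial σ k)) where
  κ : ℕ → Type u
  [fintype : ∀ i, Fintype (κ i)]
  [decEq : ∀ i, DecidableEq (κ i)]
  aug : (κ 0 →₀ MvPolynomial σ k) →ₗ[MvPolynomial σ k] MvPolynomial σ k
  d : ∀ i, (κ (i + 1) →₀ MvPolynomial σ k) →ₗ[MvPolynomial σ k] (κ i →₀ MvPolynomial σ k)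
  range_aug : LinearMap.range aug = I
  range_d_zero : LinearMap.range (d 0) = LinearMap.ker aug
  range_d_succ : ∀ i, LinearMap.range (d (i + 1)) = LinearMap.ker (d i)
  constantCoeff_d : ∀ i b a, constantCoeff (d i (Finsupp.single b 1) a) = 0

namespace MinimalFreeResolution

attribute [instance] fintype decEq

open LinearMap

variable {k σ : Type*} [CommRing k] {I : Ideal (MvPolynomial σ k)}

section

variable (A : MinimalFreeResolution.{u} I) (B : MinimalFreeResolution.{v} I)

theorem aug_comp_d : A.aug ∘ₗ A.d 0 = 0 :=
  range_le_ker_iff.mp A.range_d_zero.le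

theorem d_comp_d (i : ℕ) : A.d i ∘ₗ A.d (i + 1) = 0 :=
  range_le_ker_iff.mp (A.range_d_succ i).le

theorem constantCoeffMatrix_d (i : ℕ) : (A.d i).constantCoeffMatrix = 0 := by
  ext a b
  exact A.constantCoeff_d i b a

noncomputable def comparison : ∀ i, (A.κ i →₀ MvPolynomial σ k) →ₗ[MvPolynomial σ k]
    (B.κ i →₀ MvPolynomial σ k)
  | 0 => liftAlong B.aug A.aug
  | i + 1 => liftAlong (B.d i) (comparison i ∘ₗ A.d i)

theorem aug_comp_comparison_zero : B.aug ∘ₗ comparison A B 0 = A.aug :=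
  comp_liftAlong (by rw [A.range_aug, B.range_aug])

theorem d_comp_comparison_succ :
    ∀ i, B.d i ∘ₗ comparison A B (i + 1) = comparison A B i ∘ₗ A.d i
  | 0 => comp_liftAlong <| by
      rw [B.range_d_zero, range_le_ker_iff, ← comp_assoc, aug_comp_comparison_zero,
        aug_comp_d]
  | i + 1 => comp_liftAlong <| by
      rw [B.range_d_succ, range_le_ker_iff, ← comp_assoc, d_comp_comparison_succ i,
        comp_assoc, d_comp_d, comp_zero]

end

section nullHomotopy

variable (A : MinimalFreeResolution.{u} I)
  (φ : ∀ i, (A.κ i →₀ MvPolynomial σ k) →ₗ[MvPolynomial σ k] (A.κ i →₀ MvPolynomial σ k))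

noncomputable def nullHomotopy : ∀ i, (A.κ i →₀ MvPolynomial σ k) →ₗ[MvPolynomial σ k]
    (A.κ (i + 1) →₀ MvPolynomial σ k)
  | 0 => liftAlong (A.d 0) (φ 0 - LinearMap.id)
  | i + 1 => liftAlong (A.d (i + 1)) (φ (i + 1) - LinearMap.id - nullHomotopy i ∘ₗ A.d i)

variable {A φ} (hφ₀ : A.aug ∘ₗ φ 0 = A.aug) (hφ : ∀ i, A.d i ∘ₗ φ (i + 1) = φ i ∘ₗ A.d i)
include hφ₀

theorem d_comp_nullHomotopy_zero : A.d 0 ∘ₗ nullHomotopy A φ 0 = φ 0 - LinearMap.id :=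
  comp_liftAlong <| by rw [A.range_d_zero, range_le_ker_iff, comp_sub, hφ₀, comp_id, sub_self]

include hφ

theorem d_comp_nullHomotopy_succ : ∀ i,
    A.d (i + 1) ∘ₗ nullHomotopy A φ (i + 1) =
      φ (i + 1) - LinearMap.id - nullHomotopy A φ i ∘ₗ A.d i
  | 0 => by
      refine comp_liftAlong ?_
      rw [A.range_d_succ, range_le_ker_iff, comp_sub, comp_sub, hφ, comp_id, ← comp_assoc,
        d_comp_nullHomotopy_zero hφ₀, sub_comp, id_comp]
      abel
  | i + 1 => by
      refine comp_liftAlong ?_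
      rw [A.range_d_succ, range_le_ker_iff, comp_sub, comp_sub, hφ, comp_id, ← comp_assoc,
        d_comp_nullHomotopy_succ i, sub_comp, sub_comp, id_comp, comp_assoc, d_comp_d,
        comp_zero]
      abel

/-- `φ i` differs from `id` by `d ∘ h + h ∘ d`, and minimality kills both terms modulo the
variables. -/
theorem constantCoeffMatrix_eq_one : ∀ i, (φ i).constantCoeffMatrix = 1
  | 0 => by
      have : φ 0 = LinearMap.id + A.d 0 ∘ₗ nullHomotopy A φ 0 := by
        rw [d_comp_nullHomotopy_zero hφ₀]; abel
      rw [this, constantCoeffMatrix_add, constantCoeffMatrix_id, constantCoeffMatrix_comp,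
        constantCoeffMatrix_d, Matrix.zero_mul, add_zero]
  | i + 1 => by
      have : φ (i + 1) = LinearMap.id + A.d (i + 1) ∘ₗ nullHomotopy A φ (i + 1)
          + nullHomotopy A φ i ∘ₗ A.d i := by
        rw [d_comp_nullHomotopy_succ hφ₀ hφ]; abel
      rw [this, constantCoeffMatrix_add, constantCoeffMatrix_add, constantCoeffMatrix_id,
        constantCoeffMatrix_comp, constantCoeffMatrix_comp, constantCoeffMatrix_d,
        constantCoeffMatrix_d, Matrix.zero_mul, Matrix.mul_zero, add_zero, add_zero]

end nullHomotopy

theorem constantCoeffMatrix_comparison_mul (A : MinimalFreeResolution.{u} I)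
    (B : MinimalFreeResolution.{v} I) (i : ℕ) :
    (comparison B A i).constantCoeffMatrix * (comparison A B i).constantCoeffMatrix = 1 := by
  rw [← constantCoeffMatrix_comp]
  refine constantCoeffMatrix_eq_one (φ := fun i => comparison B A i ∘ₗ comparison A B i) ?_ ?_ i
  · rw [← comp_assoc, aug_comp_comparison_zero, aug_comp_comparison_zero]
  · intro j
    rw [← comp_assoc, d_comp_comparison_succ, comp_assoc, d_comp_comparison_succ, comp_assoc]

theorem card_eq [StrongRankCondition k] (A : MinimalFreeResolution.{u} I)
    (B : MinimalFreeResolution.{v} I) (i : ℕ) :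
    Fintype.card (A.κ i) = Fintype.card (B.κ i) :=
  le_antisymm (Matrix.card_le_of_mul_eq_one (constantCoeffMatrix_comparison_mul A B i))
    (Matrix.card_le_of_mul_eq_one (constantCoeffMatrix_comparison_mul B A i))

end MinimalFreeResolution

namespace TaylorComplex

open Finset

section faceMonomial

variable {k σ ι : Type*} [CommRing k] {u : ι → σ →₀ ℕ}

abbrev Face (ι : Type*) (i : ℕ) := {s : Finset ι // s.card = i}

instance : Subsingleton (Face ι 0) :=
  ⟨fun s t => Subtype.ext ((card_eq_zero.mp s.2).trans (card_eq_zero.mp t.2).symm)⟩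

variable (u) in
/-- `c ↦ c x^(α - lcm t) e_t`, of multidegree `α` when `lcm t ∣ x^α` (the subtraction
truncates otherwise). -/
noncomputable def faceMonomial (i : ℕ) (t : Finset ι) (α : σ →₀ ℕ) :
    k →ₗ[k] Face ι i →₀ MvPolynomial σ k :=
  if h : t.card = i then Finsupp.lsingle ⟨t, h⟩ ∘ₗ monomial (α - t.sup u) else 0

theorem faceMonomial_of_card {i : ℕ} {t : Finset ι} (h : t.card = i) (α : σ →₀ ℕ) (c : k) :
    faceMonomial u i t α c = Finsupp.single ⟨t, h⟩ (monomial (α - t.sup u) c) := by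
  simp [faceMonomial, h]

theorem single_one_eq_faceMonomial {i : ℕ} (s : Face ι i) :
    Finsupp.single s (1 : MvPolynomial σ k) = faceMonomial u i s.1 (s.1.sup u) 1 := by
  rw [faceMonomial_of_card s.2, tsub_self, ← one_def]

theorem monomial_smul_faceMonomial {i : ℕ} {t : Finset ι} {α : σ →₀ ℕ} (h : t.sup u ≤ α)
    (γ : σ →₀ ℕ) (c c' : k) :
    monomial γ c • faceMonomial u i t α c' = faceMonomial u i t (γ + α) (c * c') := by
  by_cases ht : t.card = i
  · rw [faceMonomial_of_card ht, faceMonomial_of_card ht, Finsupp.smul_single, smul_eq_mul,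
      monomial_mul, add_tsub_assoc_of_le h]
  · simp [faceMonomial, ht]

theorem constantCoeff_faceMonomial_apply {i : ℕ} {t : Finset ι} {α : σ →₀ ℕ} (h : ¬α ≤ t.sup u)
    (c : k) (a : Face ι i) : constantCoeff (faceMonomial u i t α c a) = 0 := by
  classical
  by_cases ht : t.card = i
  · rw [faceMonomial_of_card ht, Finsupp.single_apply]
    split
    · rw [constantCoeff_monomial, if_neg fun h0 => h (tsub_eq_zero_iff_le.mp h0)]
    · rw [map_zero]
  · simp [faceMonomial, ht]

end faceMonomial

section divisors

variable {σ ι : Type*} [Fintype ι] {u : ι → σ →₀ ℕ}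

variable (u) in
def divisors (α : σ →₀ ℕ) : Finset ι := by
  classical exact univ.filter fun j => u j ≤ α

theorem mem_divisors {α : σ →₀ ℕ} {j : ι} : j ∈ divisors u α ↔ u j ≤ α := by
  classical simp [divisors]

end divisors

section sign

variable {k ι : Type*} [CommRing k] [LinearOrder ι]

variable (k) in
def sign (j : ι) (s : Finset ι) : k :=
  (-1) ^ (s.filter (· < j)).card

theorem sign_of_forall_le {j : ι} {s : Finset ι} (h : ∀ x ∈ s, j ≤ x) : sign k j s = 1 := by
  rw [sign, filter_eq_empty_iff.mpr fun x hx => not_lt.mpr (h x hx), card_empty, pow_zero]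

theorem sign_insert_of_lt {j m : ι} {s : Finset ι} (hm : m ∉ s) (hmj : m < j) :
    sign k j (insert m s) = -sign k j s := by
  rw [sign, sign, filter_insert, if_pos hmj,
    card_insert_of_notMem fun h => hm (mem_of_mem_filter m h), pow_succ, mul_neg_one]

theorem sign_erase {j j' : ι} {s : Finset ι} (hj' : j' ∈ s) :
    sign k j (s.erase j') = if j' < j then -sign k j s else sign k j s := by
  unfold sign
  rw [filter_erase]
  split_ifs with h
  · have hmem : j' ∈ s.filter (· < j) := mem_filter.mpr ⟨hj', h⟩
    obtain ⟨n, hn⟩ := Nat.exists_eq_add_of_lt (card_pos.mpr ⟨j', hmem⟩)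
    rw [card_erase_of_mem hmem, hn]
    simp [pow_succ]
  · rw [erase_eq_of_notMem fun hmem : j' ∈ s.filter (· < j) => h (mem_filter.mp hmem).2]

theorem sign_mul_sign_erase_add {j j' : ι} {s : Finset ι} (hj : j ∈ s) (hj' : j' ∈ s)
    (hne : j ≠ j') :
    sign k j s * sign k j' (s.erase j) + sign k j' s * sign k j (s.erase j') = 0 := by
  rw [sign_erase hj, sign_erase hj']
  rcases hne.lt_or_gt with h | h
  · rw [if_pos h, if_neg h.not_gt]; ring
  · rw [if_neg h.not_gt, if_pos h]; ring

end sign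

variable {k σ ι : Type*} [CommRing k] [LinearOrder ι] {u : ι → σ →₀ ℕ}

variable (u) in
noncomputable def d (i : ℕ) :
    (Face ι (i + 1) →₀ MvPolynomial σ k) →ₗ[MvPolynomial σ k] (Face ι i →₀ MvPolynomial σ k) :=
  Finsupp.linearCombination _ fun s =>
    ∑ j ∈ s.1, faceMonomial u i (s.1.erase j) (s.1.sup u) (sign k j s.1)

theorem d_faceMonomial {i : ℕ} {t : Finset ι} (ht : t.card = i + 1) {α : σ →₀ ℕ}
    (hα : t.sup u ≤ α) (c : k) :
    d u i (faceMonomial u (i + 1) t α c) =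
      ∑ j ∈ t, faceMonomial u i (t.erase j) α (c * sign k j t) := by
  rw [faceMonomial_of_card ht, d, Finsupp.linearCombination_single, Finset.smul_sum]
  refine sum_congr rfl fun j _ => ?_
  rw [monomial_smul_faceMonomial (sup_mono (erase_subset j t)), tsub_add_cancel_of_le hα]

theorem d_comp_d (i : ℕ) :
    d u i ∘ₗ d u (i + 1) = (0 : (Face ι (i + 2) →₀ MvPolynomial σ k) →ₗ[_] _) := by
  refine Finsupp.lhom_ext' fun s => LinearMap.ext_ring ?_
  have herase : ∀ j ∈ s.1, (s.1.erase j).card = i + 1 := fun j hj => by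
    rw [card_erase_of_mem hj, s.2]; rfl
  simp only [LinearMap.comp_apply, Finsupp.lsingle_apply, LinearMap.zero_apply]
  rw [single_one_eq_faceMonomial (u := u), d_faceMonomial s.2 le_rfl, map_sum,
    sum_congr rfl fun j hj => d_faceMonomial (herase j hj) (sup_mono (erase_subset j _)) _,
    sum_sigma']
  refine sum_involution (fun p _ => ⟨p.2, p.1⟩) ?_ ?_ ?_ fun _ _ => rfl
  · rintro ⟨j, j'⟩ hp
    obtain ⟨hj, hj'⟩ := mem_sigma.mp hp
    rw [erase_right_comm, ← map_add, one_mul, one_mul,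
      sign_mul_sign_erase_add hj (mem_of_mem_erase hj') (ne_of_mem_erase hj').symm, map_zero]
  · rintro ⟨j, j'⟩ hp - h
    exact ne_of_mem_erase (mem_sigma.mp hp).2 (congrArg Sigma.fst h)
  · rintro ⟨j, j'⟩ hp
    obtain ⟨hj, hj'⟩ := mem_sigma.mp hp
    exact mem_sigma.mpr ⟨mem_of_mem_erase hj', mem_erase.mpr ⟨(ne_of_mem_erase hj').symm, hj⟩⟩

section contraction

variable [Fintype ι]

variable (u) in
noncomputable def contraction (i : ℕ) (t : Finset ι) (α : σ →₀ ℕ) :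
    Face ι (i + 1) →₀ MvPolynomial σ k :=
  if h : (divisors u α).Nonempty then
    if (divisors u α).min' h ∈ t then 0
    else faceMonomial u (i + 1) (insert ((divisors u α).min' h) t) α 1
  else 0

variable (u) in
noncomputable def homotopy (i : ℕ) :
    (Face ι i →₀ MvPolynomial σ k) →ₗ[k] (Face ι (i + 1) →₀ MvPolynomial σ k) :=
  Finsupp.lsum k fun s =>
    (basisMonomials σ k).constr k fun β => contraction u i s.1 (β + s.1.sup u)

theorem homotopy_faceMonomial {i : ℕ} {t : Finset ι} (ht : t.card = i) {α : σ →₀ ℕ}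
    (hα : t.sup u ≤ α) {m : ι} (hm : IsLeast ↑(divisors u α) m) (c : k) :
    homotopy u i (faceMonomial u i t α c) =
      if m ∈ t then 0 else faceMonomial u (i + 1) (insert m t) α c := by
  have hne : (divisors u α).Nonempty := ⟨m, hm.1⟩
  have hmin : (divisors u α).min' hne = m := (isLeast_min' _ hne).unique hm
  have hβ : monomial (α - t.sup u) c = c • basisMonomials σ k (α - t.sup u) := by
    rw [coe_basisMonomials, smul_monomial, smul_eq_mul, mul_one]
  rw [faceMonomial_of_card ht, homotopy, Finsupp.lsum_single, hβ, map_smul,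
    Module.Basis.constr_basis, tsub_add_cancel_of_le hα, contraction, dif_pos hne, hmin]
  split_ifs
  · rw [smul_zero]
  · rw [← map_smul, smul_eq_mul, mul_one]

/-- If the least divisor `m` of `x^α` lies in `s`, the contraction kills every face of `d s`
except `s \ {m}`, which it sends back to `s`; otherwise the faces of `d (s ∪ {m})` other than `s`
cancel against the contraction of `d s`. -/
theorem d_homotopy_add_homotopy_d_faceMonomial {i : ℕ} {s : Finset ι} (hs : s.card = i + 1)
    {α : σ →₀ ℕ} (hα : s.sup u ≤ α) :
    d u (i + 1) (homotopy u (i + 1) (faceMonomial u (i + 1) s α 1)) +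
        homotopy u i (d u i (faceMonomial u (i + 1) s α (1 : k))) =
      faceMonomial u (i + 1) s α 1 := by
  have hpos : 0 < s.card := by omega
  obtain ⟨j₀, hj₀⟩ := card_pos.mp hpos
  have hne : (divisors u α).Nonempty := ⟨j₀, mem_divisors.mpr ((le_sup hj₀).trans hα)⟩
  set m := (divisors u α).min' hne
  have hm : IsLeast ↑(divisors u α) m := isLeast_min' _ hne
  have hm_le : ∀ x ∈ s, m ≤ x := fun x hx => hm.2 (mem_divisors.mpr ((le_sup hx).trans hα))
  have hhd : homotopy u i (d u i (faceMonomial u (i + 1) s α (1 : k))) =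
      ∑ j ∈ s, if m ∈ s.erase j then 0
        else faceMonomial u (i + 1) (insert m (s.erase j)) α (sign k j s) := by
    rw [d_faceMonomial hs hα, map_sum]
    refine sum_congr rfl fun j hj => ?_
    rw [homotopy_faceMonomial (by rw [card_erase_of_mem hj, hs]; rfl)
      ((sup_mono (erase_subset j s)).trans hα) hm, one_mul]
  rw [homotopy_faceMonomial hs hα hm, hhd]
  by_cases hms : m ∈ s
  · rw [if_pos hms, map_zero, zero_add, sum_eq_single_of_mem m hms, if_neg (notMem_erase m s),
      insert_erase hms, sign_of_forall_le hm_le]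
    intro j _ hjm
    rw [if_pos (mem_erase.mpr ⟨Ne.symm hjm, hms⟩)]
  · have hins : (insert m s).card = i + 1 + 1 := by rw [card_insert_of_notMem hms, hs]
    have hsup_ins : (insert m s).sup u ≤ α := by
      rw [sup_insert]; exact sup_le (mem_divisors.mp hm.1) hα
    have hm_le_ins : ∀ x ∈ insert m s, m ≤ x := fun x hx =>
      (mem_insert.mp hx).elim (fun h => h.ge) (hm_le x)
    rw [if_neg hms, d_faceMonomial hins hsup_ins, sum_insert hms, erase_insert hms, one_mul,
      sign_of_forall_le hm_le_ins, add_assoc, ← sum_add_distrib, sum_eq_zero, add_zero]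
    intro j hj
    have hmj : m < j := (hm_le j hj).lt_of_ne fun h => hms (h ▸ hj)
    rw [erase_insert_of_ne hmj.ne, one_mul, sign_insert_of_lt hms hmj,
      if_neg fun h => hms (mem_of_mem_erase h), ← map_add, neg_add_cancel, map_zero]

theorem d_comp_homotopy_add_homotopy_comp_d (i : ℕ) :
    (d u (i + 1)).restrictScalars k ∘ₗ homotopy u (i + 1) +
      homotopy u i ∘ₗ (d u i).restrictScalars k = LinearMap.id := by
  refine Finsupp.lhom_ext' fun s => (basisMonomials σ k).ext fun β => ?_
  have hs : Finsupp.lsingle (R := k) s (basisMonomials σ k β) =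
      faceMonomial u (i + 1) s.1 (β + s.1.sup u) 1 := by
    rw [coe_basisMonomials, faceMonomial_of_card s.2, add_tsub_cancel_right]; rfl
  simp only [LinearMap.comp_apply, LinearMap.add_apply, LinearMap.id_apply,
    LinearMap.restrictScalars_apply, hs]
  exact d_homotopy_add_homotopy_d_faceMonomial s.2 le_add_self

theorem range_d_eq_ker (i : ℕ) :
    LinearMap.range (d u (i + 1)) = LinearMap.ker (d (k := k) u i) := by
  refine le_antisymm (LinearMap.range_le_ker_iff.mpr (d_comp_d i)) fun z hz =>
    ⟨homotopy u (i + 1) z, ?_⟩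
  simpa [LinearMap.mem_ker.mp hz] using
    LinearMap.congr_fun (d_comp_homotopy_add_homotopy_comp_d (u := u) i) z

end contraction

theorem constantCoeff_d_single_apply (hu : ∀ j (s : Finset ι), j ∉ s → ¬u j ≤ s.sup u) (i : ℕ)
    (b : Face ι (i + 1)) (a : Face ι i) :
    constantCoeff (d u i (Finsupp.single b (1 : MvPolynomial σ k)) a) = 0 := by
  rw [single_one_eq_faceMonomial, d_faceMonomial b.2 le_rfl, Finsupp.finsetSum_apply, map_sum]
  exact sum_eq_zero fun j hj => constantCoeff_faceMonomial_apply
    (fun h => hu j _ (notMem_erase j _) ((le_sup hj).trans h)) _ _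

variable (u) in
noncomputable def aug : (Face ι 1 →₀ MvPolynomial σ k) →ₗ[MvPolynomial σ k] MvPolynomial σ k :=
  (Finsupp.uniqueLinearEquiv _ _ (⟨∅, card_empty⟩ : Face ι 0)).toLinearMap ∘ₗ d u 0

theorem aug_single_singleton (j : ι) :
    aug u (Finsupp.single ⟨{j}, card_singleton j⟩ (1 : MvPolynomial σ k)) = monomial (u j) 1 := by
  rw [aug, LinearMap.comp_apply, single_one_eq_faceMonomial,
    d_faceMonomial (card_singleton j) le_rfl, sum_singleton, erase_singleton, one_mul,
    sign_of_forall_le fun x hx => (mem_singleton.mp hx).ge, faceMonomial_of_card card_empty]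
  simp [bot_eq_zero]

theorem range_aug :
    LinearMap.range (aug (k := k) u) = Ideal.span (Set.range fun j => monomial (u j) 1) := by
  have : aug (k := k) u = Finsupp.linearCombination _ fun s => aug u (Finsupp.single s 1) :=
    Finsupp.lhom_ext' fun s => LinearMap.ext_ring (by simp)
  rw [this, Finsupp.range_linearCombination]
  congr 1
  ext p
  constructor
  · rintro ⟨s, rfl⟩
    obtain ⟨j, hj⟩ := card_eq_one.mp s.2
    obtain rfl : s = ⟨{j}, card_singleton j⟩ := Subtype.ext hj
    exact ⟨j, (aug_single_singleton j).symm⟩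
  · rintro ⟨j, rfl⟩
    exact ⟨_, aug_single_singleton j⟩

variable [Fintype ι]

variable (u) in
noncomputable def resolution (hu : ∀ j (s : Finset ι), j ∉ s → ¬u j ≤ s.sup u) :
    MinimalFreeResolution (Ideal.span (Set.range fun j => monomial (u j) (1 : k))) where
  κ i := Face ι (i + 1)
  aug := aug u
  d i := d u (i + 1)
  range_aug := range_aug
  range_d_zero := by rw [aug, LinearEquiv.ker_comp]; exact range_d_eq_ker 0
  range_d_succ i := range_d_eq_ker (i + 1)
  constantCoeff_d i := constantCoeff_d_single_apply hu (i + 1)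

end TaylorComplex

theorem MinimalFreeResolution.card_eq_choose {k σ ι : Type*} [CommRing k] [StrongRankCondition k]
    [Fintype ι] {u : ι → σ →₀ ℕ} (hu : ∀ j (s : Finset ι), j ∉ s → ¬u j ≤ s.sup u)
    {I : Ideal (MvPolynomial σ k)} (A : MinimalFreeResolution I)
    (hI : I = Ideal.span (Set.range fun j => monomial (u j) 1)) (i : ℕ) :
    Fintype.card (A.κ i) = (Fintype.card ι).choose (i + 1) := by
  subst hI
  let : LinearOrder ι := LinearOrder.lift' _ (Fintype.equivFin ι).injective
  rw [A.card_eq (TaylorComplex.resolution u hu) i]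
  exact Fintype.card_finset_len (i + 1)

namespace MinimalGradedFreeResolution

variable {k σ : Type*} [Field k] {I : Ideal (MvPolynomial σ k)}
  (R : MinimalGradedFreeResolution I)

noncomputable def toMinimalFreeResolution : MinimalFreeResolution I where
  κ i := Fin (R.rk i)
  aug := R.aug
  d := R.d
  range_aug := R.range_aug
  range_d_zero := R.exact_zero
  range_d_succ := R.exact_succ
  constantCoeff_d := R.minimal

theorem exists_betti_ne_zero_iff (i : ℕ) : (∃ j, R.betti i j ≠ 0) ↔ R.rk i ≠ 0 := by
  constructor
  · rintro ⟨j, hj⟩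
    obtain ⟨⟨⟨a, -⟩⟩, -⟩ := Nat.card_ne_zero.mp hj
    exact a.pos.ne'
  · intro h
    let a : Fin (R.rk i) := ⟨0, Nat.pos_of_ne_zero h⟩
    exact ⟨R.deg i a, Nat.card_ne_zero.mpr ⟨⟨⟨a, rfl⟩⟩, inferInstance⟩⟩

theorem pd_eq_of_rk_ne_zero_iff {p : ℕ} (h : ∀ i, R.rk i ≠ 0 ↔ i ≤ p) : R.pd = p := by
  have : {i | ∃ j, R.betti i j ≠ 0} = Set.Iic p :=
    Set.ext fun i => (R.exists_betti_ne_zero_iff i).trans (h i)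
  rw [pd, this, csSup_Iic]

end MinimalGradedFreeResolution

namespace VWOrientedGraph

variable {V : Type*} (D : VWOrientedGraph V)

abbrev Edge := {p : V × V // D.edge p.1 p.2}

noncomputable def edgeExponent (e : D.Edge) : V →₀ ℕ :=
  Finsupp.single e.1.1 1 + Finsupp.single e.1.2 (D.w e.1.2)

theorem edgeIdeal_eq_span (k : Type*) [Field k] :
    D.edgeIdeal k = Ideal.span (Set.range fun e => monomial (D.edgeExponent e) (1 : k)) := by
  have hX (e : D.Edge) : monomial (D.edgeExponent e) (1 : k) = X e.1.1 * X e.1.2 ^ D.w e.1.2 := by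
    rw [edgeExponent, X_pow_eq_monomial, X, monomial_mul, one_mul]
  rw [edgeIdeal]
  congr 1
  ext p
  constructor
  · rintro ⟨a, b, hab, rfl⟩
    exact ⟨⟨(a, b), hab⟩, hX _⟩
  · rintro ⟨e, rfl⟩
    exact ⟨_, _, e.2, hX e⟩

variable {D}

theorem not_edgeExponent_le_sup (hin : ∀ u u' v, D.edge u v → D.edge u' v → u = u')
    (hw : ∀ u v, D.edge u v → 2 ≤ D.w v) {e : D.Edge} {s : Finset D.Edge} (he : e ∉ s) :
    ¬D.edgeExponent e ≤ s.sup D.edgeExponent := by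
  classical
  obtain ⟨⟨a, b⟩, hab⟩ := e
  have hother : ∀ e' ∈ s, D.edgeExponent e' b ≤ 1 := by
    rintro ⟨⟨a', b'⟩, hab'⟩ he'
    have hb' : b' ≠ b := by
      rintro rfl
      obtain rfl := hin _ _ _ hab hab'
      exact he he'
    simp only [edgeExponent, Finsupp.add_apply, Finsupp.single_apply, if_neg hb']
    split_ifs <;> omega
  have hsup : s.sup D.edgeExponent b ≤ 1 :=
    Finset.sup_induction (p := fun f : V →₀ ℕ => f b ≤ 1) (by simp [bot_eq_zero])
      (fun f hf g hg => by simpa [Finsupp.sup_apply] using ⟨hf, hg⟩) hother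
  have hhead : D.w b ≤ D.edgeExponent ⟨(a, b), hab⟩ b := by
    simp [edgeExponent]
  intro hle
  have hwb := hw a b hab
  have hleb := hle b
  omega

theorem pd_edgeIdeal_eq_edgeCount_sub_one {k : Type*} [Field k] [Finite D.Edge] [Nonempty D.Edge]
    (hin : ∀ u u' v, D.edge u v → D.edge u' v → u = u') (hw : ∀ u v, D.edge u v → 2 ≤ D.w v)
    (R : MinimalGradedFreeResolution (D.edgeIdeal k)) :
    R.pd = D.edgeCount - 1 := by
  have := Fintype.ofFinite D.Edge
  have hrk (i : ℕ) : R.rk i = D.edgeCount.choose (i + 1) := by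
    rw [edgeCount, Nat.card_eq_fintype_card, ← Fintype.card_fin (R.rk i)]
    exact R.toMinimalFreeResolution.card_eq_choose (fun _ _ => not_edgeExponent_le_sup hin hw)
      (D.edgeIdeal_eq_span k) i
  have hpos : 0 < D.edgeCount := Nat.card_pos
  refine R.pd_eq_of_rk_ne_zero_iff fun i => ?_
  rw [hrk, Ne, Nat.choose_eq_zero_iff, not_lt]
  omega

theorem IsOrientedCycle.eq_of_edge_of_edge (hD : D.IsOrientedCycle) {u u' v : V}
    (h : D.edge u v) (h' : D.edge u' v) : u = u' := by
  obtain ⟨n, -, c, hc⟩ := hD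
  obtain ⟨i, rfl, rfl⟩ := (hc _ _).mp h
  obtain ⟨i', rfl, hi'⟩ := (hc _ _).mp h'
  rw [add_right_cancel (c.injective hi')]

theorem IsOrientedCycle.nonempty_edge (hD : D.IsOrientedCycle) : Nonempty D.Edge := by
  obtain ⟨n, -, c, hc⟩ := hD
  exact ⟨⟨(c 0, c (0 + 1)), (hc _ _).mpr ⟨0, rfl, rfl⟩⟩⟩

end VWOrientedGraph

/-- Theorem 4.1 of Zhu–Wang–et al., used as Lemma 3.3.
Let `D = (V(D), E(D), w)` be a vertex-weighted oriented cycle such that `w(x) ≥ 2`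
for every vertex `x ∈ V(D)`.  Then `pd (I(D)) = |E(D)| − 1`. -/
theorem pd_edgeIdeal_orientedCycle {k V : Type*} [Field k] [Fintype V]
    (D : VWOrientedGraph V) (hD : D.IsOrientedCycle)
    (hw : ∀ v : V, 2 ≤ D.w v)
    (R : MinimalGradedFreeResolution (D.edgeIdeal k)) :
    R.pd = D.edgeCount - 1 :=
  have := hD.nonempty_edge
  D.pd_edgeIdeal_eq_edgeCount_sub_one (fun _ _ _ => hD.eq_of_edge_of_edge)
    (fun _ v _ => hw v) R
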